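/- Let d ≥ 1, let q > d/2, and define S̄ := sup_{x∈ℤ^d} ∑_{y∈ℤ^d} (|y|+1)^{−q}(|x−y|+1)^{−q}, which is finite. Let β > 0 and let f, g : ℤ^d → [0,∞) satisfy f(x) ≤ β(|x|+1)^{−q} and g(x) ≤ (|x|+1)^{−q} for all x. Define M⁽²⁾(x,y) := f(x)² g(y), and recursively M⁽ⁿ⁾(x,y) := ∑_{u∈ℤ^d} M⁽ⁿ⁻¹⁾(u,x) f(x−u) g(y−u) for n ≥ 3. Then there is a constant C depending only on d and q such that for all n ≥ 2 and all x, y ∈ ℤ^d, M⁽ⁿ⁾(x,y) ≤ βⁿ (C S̄)^{n−2} (|x|+1)^{−2q}(|y|+1)^{−q}. -/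

import Mathlib

open scoped BigOperators ENNReal

/-- Points of `ℤ^d`. -/
abbrev V (d : ℕ) := Fin d → ℤ

/-- The Euclidean norm of a point of `ℤ^d`. -/
noncomputable def znorm {d : ℕ} (x : V d) : ℝ :=
  Real.sqrt (∑ i, ((x i : ℝ)) ^ 2)

/-- The weight `|x| + 1`, as an extended nonnegative real. -/
noncomputable def w {d : ℕ} (x : V d) : ℝ≥0∞ := ENNReal.ofReal (znorm x + 1)

/-- The bubble quantity `S̄ = sup_x ∑_y (|y|+1)^{−q} (|x−y|+1)^{−q}`. -/
noncomputable def Sbar (d : ℕ) (q : ℝ) : ℝ≥0∞ :=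
  ⨆ x : V d, ∑' y : V d, w y ^ (-q) * w (x - y) ^ (-q)

/-- The self-avoiding walk diagrams: `M⁽²⁾(x,y) = f(x)² g(y)` and, recursively for `n ≥ 3`,
`M⁽ⁿ⁾(x,y) = ∑_u M⁽ⁿ⁻¹⁾(u,x) f(x−u) g(y−u)`. -/
noncomputable def Msaw {d : ℕ} (f g : V d → ℝ) : ℕ → V d → V d → ℝ≥0∞
  | 0, _, _ => 0
  | 1, _, _ => 0
  | 2, x, y => ENNReal.ofReal (f x) ^ 2 * ENNReal.ofReal (g y)
  | n + 3, x, y => ∑' u : V d,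
      Msaw f g (n + 2) u x * ENNReal.ofReal (f (x - u)) * ENNReal.ofReal (g (y - u))

/-! The convolution step rests on the pointwise bound
`(|u|+1)^{-q} (|x-u|+1)^{-q} ≤ 2^q (|x|+1)^{-q} ((|u|+1)^{-q} + (|x-u|+1)^{-q})`,
true because one of `|u|+1`, `|x-u|+1` is at least `(|x|+1)/2`. Applied at `x` and at `y`, it bounds
`∑_u (|u|+1)^{-2q} (|x-u|+1)^{-q} (|y-u|+1)^{-q}` by `4·4^q S̄ (|x|+1)^{-q} (|y|+1)^{-q}`, which is
exactly one step of the recursion for `M⁽ⁿ⁾`.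

`S̄` is finite: `ab ≤ a² + b²` gives `S̄ ≤ 2 ∑_y (|y|+1)^{-2q}`, and `(|y|+1)^d ≥ ∏_i (|y_i|+1)`
dominates this sum by the `d`-th power of `∑_{k ∈ ℤ} (|k|+1)^{-2q/d}`, which converges since
`2q/d > 1`. -/

namespace ENNReal

theorem rpow_neg_le_rpow_neg {q : ℝ} (hq : 0 ≤ q) {a b : ℝ≥0∞} (h : a ≤ b) :
    b ^ (-q) ≤ a ^ (-q) := by
  rw [rpow_neg, rpow_neg]
  exact ENNReal.inv_le_inv.2 (rpow_le_rpow h hq)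

theorem rpow_neg_two_mul (x : ℝ≥0∞) (q : ℝ) : x ^ (-(2 * q)) = x ^ (-q) * x ^ (-q) := by
  rw [show -(2 * q) = -q * 2 by ring, rpow_mul, rpow_two, sq]

theorem rpow_neg_le_two_rpow_mul {q : ℝ} (hq : 0 ≤ q) {c m : ℝ≥0∞} (h : m ≤ 2 * c) :
    c ^ (-q) ≤ 2 ^ q * m ^ (-q) := by
  have h2q : (2 : ℝ≥0∞) ^ q ≠ 0 := (rpow_pos two_pos ofNat_ne_top).ne'
  have h2q' : (2 : ℝ≥0∞) ^ q ≠ ⊤ := rpow_ne_top_of_nonneg hq ofNat_ne_top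
  have hm : m ^ q ≤ 2 ^ q * c ^ q := by
    rw [← mul_rpow_of_nonneg _ _ hq]
    exact rpow_le_rpow h hq
  rw [rpow_neg, rpow_neg, ← div_eq_mul_inv, ENNReal.le_div_iff_mul_le (Or.inr h2q) (Or.inr h2q'),
    mul_comm, ← div_eq_mul_inv, ENNReal.div_le_iff_le_mul (Or.inr h2q') (Or.inr h2q)]
  exact hm

theorem rpow_neg_mul_rpow_neg_le {q : ℝ} (hq : 0 ≤ q) {a c m : ℝ≥0∞} (h : m ≤ a + c) :
    a ^ (-q) * c ^ (-q) ≤ 2 ^ q * m ^ (-q) * (a ^ (-q) + c ^ (-q)) := by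
  wlog hac : a ≤ c generalizing a c
  · rw [mul_comm, add_comm (a ^ (-q))]
    exact this (by rwa [add_comm]) (le_of_not_ge hac)
  have hc : c ^ (-q) ≤ 2 ^ q * m ^ (-q) :=
    rpow_neg_le_two_rpow_mul hq (h.trans (by rw [two_mul]; gcongr))
  calc a ^ (-q) * c ^ (-q) ≤ 2 ^ q * m ^ (-q) * a ^ (-q) := by
        rw [mul_comm]; gcongr
    _ ≤ 2 ^ q * m ^ (-q) * (a ^ (-q) + c ^ (-q)) := by gcongr; exact le_self_add

theorem tsum_pi_prod_le {ι α : Type*} [Fintype ι] (g : ι → α → ℝ≥0∞) :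
    ∑' y : ι → α, ∏ i, g i (y i) ≤ ∏ i, ∑' a, g i a := by
  classical
  rw [ENNReal.tsum_eq_iSup_sum]
  refine iSup_le fun s => ?_
  calc ∑ y ∈ s, ∏ i, g i (y i)
      ≤ ∑ y ∈ Fintype.piFinset (fun i => s.image (· i)), ∏ i, g i (y i) :=
        Finset.sum_le_sum_of_subset fun y hy =>
          Fintype.mem_piFinset.2 fun i => Finset.mem_image_of_mem _ hy
    _ = ∏ i, ∑ a ∈ s.image (· i), g i a := (Finset.prod_univ_sum _ _).symm
    _ ≤ ∏ i, ∑' a, g i a := Finset.prod_le_prod' fun i _ => ENNReal.sum_le_tsum _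

end ENNReal

section Weight

variable {G : Type*} [AddCommGroup G] {W : G → ℝ≥0∞} {q : ℝ}

noncomputable def bubble (W : G → ℝ≥0∞) (q : ℝ) : ℝ≥0∞ :=
  ⨆ x, ∑' y, W y ^ (-q) * W (x - y) ^ (-q)

theorem tsum_rpow_neg_sub_mul_le_bubble (hW : ∀ x, W (-x) = W x) (a b : G) :
    ∑' u, W (a - u) ^ (-q) * W (b - u) ^ (-q) ≤ bubble W q := by
  have hshift : ∑' u, W (a - u) ^ (-q) * W (b - u) ^ (-q)
      = ∑' v, W v ^ (-q) * W ((a - b) - v) ^ (-q) := by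
    rw [← (Equiv.subLeft a).tsum_eq]
    congr 1 with v
    rw [Equiv.subLeft_apply, sub_sub_cancel, ← hW (b - (a - v)), neg_sub, sub_right_comm]
  exact hshift ▸ le_iSup (fun x => ∑' y, W y ^ (-q) * W (x - y) ^ (-q)) (a - b)

theorem bubble_le_two_mul_tsum : bubble W q ≤ 2 * ∑' y, W y ^ (-(2 * q)) := by
  refine iSup_le fun x => ?_
  have hsq : ∀ s t : ℝ≥0∞, s * t ≤ s * s + t * t := fun s t => by
    rcases le_total s t with h | h
    · exact (mul_le_mul_left h t).trans le_add_self
    · exact (mul_le_mul_right h s).trans le_self_add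
  calc ∑' y, W y ^ (-q) * W (x - y) ^ (-q)
      ≤ ∑' y, (W y ^ (-(2 * q)) + W (x - y) ^ (-(2 * q))) := by
        refine ENNReal.tsum_le_tsum fun y => ?_
        simp only [ENNReal.rpow_neg_two_mul]
        exact hsq _ _
    _ = 2 * ∑' y, W y ^ (-(2 * q)) := by
        have hshift := (Equiv.subLeft x).tsum_eq (fun y => W y ^ (-(2 * q)))
        simp only [Equiv.subLeft_apply] at hshift
        rw [ENNReal.tsum_add, hshift, ← two_mul]

theorem tsum_rpow_neg_two_mul_mul_le_bubble (hq : 0 ≤ q) (hW : ∀ x, W (-x) = W x)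
    (htri : ∀ x u, W x ≤ W u + W (x - u)) (x y : G) :
    ∑' u, W u ^ (-(2 * q)) * W (x - u) ^ (-q) * W (y - u) ^ (-q) ≤
      4 * 2 ^ q * 2 ^ q * bubble W q * (W x ^ (-q) * W y ^ (-q)) := by
  have hW0 : ∀ u, W u = W (0 - u) := fun u => by rw [zero_sub, hW]
  have pointwise : ∀ u, W u ^ (-(2 * q)) * W (x - u) ^ (-q) * W (y - u) ^ (-q) ≤
      2 ^ q * 2 ^ q * (W x ^ (-q) * W y ^ (-q)) *
        ((W u ^ (-q) + W (x - u) ^ (-q)) * (W u ^ (-q) + W (y - u) ^ (-q))) := fun u =>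
    calc W u ^ (-(2 * q)) * W (x - u) ^ (-q) * W (y - u) ^ (-q)
        = (W u ^ (-q) * W (x - u) ^ (-q)) * (W u ^ (-q) * W (y - u) ^ (-q)) := by
          rw [ENNReal.rpow_neg_two_mul]; ring
      _ ≤ (2 ^ q * W x ^ (-q) * (W u ^ (-q) + W (x - u) ^ (-q))) *
            (2 ^ q * W y ^ (-q) * (W u ^ (-q) + W (y - u) ^ (-q))) :=
          mul_le_mul' (ENNReal.rpow_neg_mul_rpow_neg_le hq (htri x u))
            (ENNReal.rpow_neg_mul_rpow_neg_le hq (htri y u))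
      _ = _ := by ring
  have expand : ∀ u, (W u ^ (-q) + W (x - u) ^ (-q)) * (W u ^ (-q) + W (y - u) ^ (-q))
      = W (0 - u) ^ (-q) * W (0 - u) ^ (-q) + W (0 - u) ^ (-q) * W (y - u) ^ (-q)
        + W (x - u) ^ (-q) * W (0 - u) ^ (-q) + W (x - u) ^ (-q) * W (y - u) ^ (-q) :=
    fun u => by rw [← hW0]; ring
  have hsum : ∑' u, (W u ^ (-q) + W (x - u) ^ (-q)) * (W u ^ (-q) + W (y - u) ^ (-q))
      ≤ 4 * bubble W q := by
    simp only [expand, ENNReal.tsum_add]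
    calc _ ≤ bubble W q + bubble W q + bubble W q + bubble W q := by
          gcongr <;> exact tsum_rpow_neg_sub_mul_le_bubble hW _ _
      _ = 4 * bubble W q := by ring
  calc ∑' u, W u ^ (-(2 * q)) * W (x - u) ^ (-q) * W (y - u) ^ (-q)
      ≤ 2 ^ q * 2 ^ q * (W x ^ (-q) * W y ^ (-q)) *
          ∑' u, (W u ^ (-q) + W (x - u) ^ (-q)) * (W u ^ (-q) + W (y - u) ^ (-q)) := by
        rw [← ENNReal.tsum_mul_left]; exact ENNReal.tsum_le_tsum pointwise
    _ ≤ 2 ^ q * 2 ^ q * (W x ^ (-q) * W y ^ (-q)) * (4 * bubble W q) := by gcongr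
    _ = 4 * 2 ^ q * 2 ^ q * bubble W q * (W x ^ (-q) * W y ^ (-q)) := by ring

end Weight

theorem tsum_ofReal_abs_add_one_rpow_neg_ne_top {r : ℝ} (hr : 1 < r) :
    ∑' k : ℤ, ENNReal.ofReal (|(k : ℝ)| + 1) ^ (-r) ≠ ⊤ := by
  have hpos : ∀ k : ℤ, 0 < |(k : ℝ)| + 1 := fun k => by positivity
  have hsum : Summable fun k : ℤ => (|(k : ℝ)| + 1) ^ (-r) := by
    refine (Real.summable_abs_int_rpow hr).of_norm_bounded_eventually ?_
    filter_upwards [Filter.eventually_cofinite_ne 0] with k hk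
    rw [Real.norm_of_nonneg (Real.rpow_nonneg (hpos k).le _)]
    exact Real.rpow_le_rpow_of_nonpos (abs_pos.2 (Int.cast_ne_zero.2 hk)) (by linarith)
      (by linarith)
  simp_rw [ENNReal.ofReal_rpow_of_pos (hpos _)]
  rw [← ENNReal.ofReal_tsum_of_nonneg (fun k => Real.rpow_nonneg (hpos k).le _) hsum]
  exact ENNReal.ofReal_ne_top

theorem znorm_nonneg {d : ℕ} (x : V d) : 0 ≤ znorm x := Real.sqrt_nonneg _

theorem znorm_neg {d : ℕ} (x : V d) : znorm (-x) = znorm x := by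
  simp [znorm]

theorem abs_le_znorm {d : ℕ} (x : V d) (i : Fin d) : |(x i : ℝ)| ≤ znorm x := by
  rw [← Real.sqrt_sq_eq_abs, znorm]
  exact Real.sqrt_le_sqrt (Finset.single_le_sum (f := fun j => (x j : ℝ) ^ 2)
    (fun j _ => sq_nonneg _) (Finset.mem_univ i))

theorem znorm_le_add_znorm_sub {d : ℕ} (x u : V d) : znorm x ≤ znorm u + znorm (x - u) := by
  let toEuclidean : V d → EuclideanSpace ℝ (Fin d) := fun z => WithLp.toLp 2 fun i => (z i : ℝ)
  have hnorm : ∀ z, znorm z = ‖toEuclidean z‖ := fun z => by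
    simp [EuclideanSpace.norm_eq, znorm, toEuclidean]
  have hsub : toEuclidean (x - u) = toEuclidean x - toEuclidean u := by
    ext i; simp [toEuclidean]
  rw [hnorm, hnorm, hnorm, hsub]
  exact norm_le_norm_add_norm_sub' _ _

theorem w_neg {d : ℕ} (x : V d) : w (-x) = w x := by
  rw [w, w, znorm_neg]

theorem w_le_add_w_sub {d : ℕ} (x u : V d) : w x ≤ w u + w (x - u) := by
  have := znorm_le_add_znorm_sub x u
  have := znorm_nonneg u
  have := znorm_nonneg (x - u)
  rw [w, w, w, ← ENNReal.ofReal_add (by positivity) (by positivity)]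
  exact ENNReal.ofReal_le_ofReal (by linarith)

theorem w_rpow_neg_le_prod {d : ℕ} (hd : 1 ≤ d) {p : ℝ} (hp : 0 ≤ p) (y : V d) :
    w y ^ (-p) ≤ ∏ i, ENNReal.ofReal (|(y i : ℝ)| + 1) ^ (-(p / d)) := by
  have hd' : (d : ℝ) ≠ 0 := by positivity
  have hprod : ∏ i, ENNReal.ofReal (|(y i : ℝ)| + 1) ≤ w y ^ d := by
    calc ∏ i, ENNReal.ofReal (|(y i : ℝ)| + 1) ≤ ∏ _i : Fin d, w y :=
          Finset.prod_le_prod' fun i _ =>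
            ENNReal.ofReal_le_ofReal (by linarith [abs_le_znorm y i])
      _ = w y ^ d := by rw [Finset.prod_const, Finset.card_univ, Fintype.card_fin]
  rw [ENNReal.prod_rpow_of_ne_top (fun _ _ => ENNReal.ofReal_ne_top),
    show -p = d * -(p / d) by field_simp, ENNReal.rpow_mul, ENNReal.rpow_natCast]
  exact ENNReal.rpow_neg_le_rpow_neg (by positivity) hprod

theorem tsum_w_rpow_neg_ne_top {d : ℕ} (hd : 1 ≤ d) {p : ℝ} (hp : d < p) :
    ∑' y : V d, w y ^ (-p) ≠ ⊤ := by
  have hd' : (0 : ℝ) < d := by exact_mod_cast hd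
  have hr : 1 < p / d := by rwa [one_lt_div hd']
  have hle : ∑' y : V d, w y ^ (-p) ≤
      ∏ _i : Fin d, ∑' k : ℤ, ENNReal.ofReal (|(k : ℝ)| + 1) ^ (-(p / d)) :=
    (ENNReal.tsum_le_tsum (w_rpow_neg_le_prod hd (by linarith))).trans
      (ENNReal.tsum_pi_prod_le fun (_ : Fin d) (k : ℤ) =>
        ENNReal.ofReal (|(k : ℝ)| + 1) ^ (-(p / d)))
  exact ne_top_of_le_ne_top
    (ENNReal.prod_ne_top fun _ _ => tsum_ofReal_abs_add_one_rpow_neg_ne_top hr) hle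

theorem Msaw_le {d : ℕ} {q : ℝ} {f g : V d → ℝ} {B K : ℝ≥0∞}
    (hf : ∀ z, ENNReal.ofReal (f z) ≤ B * w z ^ (-q))
    (hg : ∀ z, ENNReal.ofReal (g z) ≤ w z ^ (-q))
    (hK : ∀ x y : V d, ∑' u, w u ^ (-(2 * q)) * w (x - u) ^ (-q) * w (y - u) ^ (-q) ≤
      K * (w x ^ (-q) * w y ^ (-q)))
    (n : ℕ) (x y : V d) :
    Msaw f g (n + 2) x y ≤ B ^ (n + 2) * K ^ n * w x ^ (-(2 * q)) * w y ^ (-q) := by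
  induction n generalizing x y with
  | zero =>
    calc ENNReal.ofReal (f x) ^ 2 * ENNReal.ofReal (g y)
        ≤ (B * w x ^ (-q)) ^ 2 * w y ^ (-q) := by gcongr <;> simp only [hf, hg]
      _ = B ^ (0 + 2) * K ^ 0 * w x ^ (-(2 * q)) * w y ^ (-q) := by
        rw [ENNReal.rpow_neg_two_mul]; ring
  | succ n ih =>
    calc ∑' u, Msaw f g (n + 2) u x * ENNReal.ofReal (f (x - u)) * ENNReal.ofReal (g (y - u))
        ≤ ∑' u, B ^ (n + 3) * K ^ n * w x ^ (-q) *
            (w u ^ (-(2 * q)) * w (x - u) ^ (-q) * w (y - u) ^ (-q)) := by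
          refine ENNReal.tsum_le_tsum fun u => ?_
          calc Msaw f g (n + 2) u x * ENNReal.ofReal (f (x - u)) * ENNReal.ofReal (g (y - u))
              ≤ (B ^ (n + 2) * K ^ n * w u ^ (-(2 * q)) * w x ^ (-q)) *
                  (B * w (x - u) ^ (-q)) * w (y - u) ^ (-q) := by
                gcongr
                exacts [ih u x, hf _, hg _]
            _ = _ := by ring
      _ ≤ B ^ (n + 3) * K ^ n * w x ^ (-q) * (K * (w x ^ (-q) * w y ^ (-q))) := by
          rw [ENNReal.tsum_mul_left]; gcongr; exact hK x y
      _ = B ^ (n + 1 + 2) * K ^ (n + 1) * w x ^ (-(2 * q)) * w y ^ (-q) := by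
          rw [ENNReal.rpow_neg_two_mul]; ring

theorem Sbar_eq_bubble (d : ℕ) (q : ℝ) : Sbar d q = bubble (w (d := d)) q := rfl

theorem stmt10 (d : ℕ) (hd : 1 ≤ d) (q : ℝ) (hq : (d : ℝ) / 2 < q) :
    Sbar d q ≠ ⊤ ∧
    ∃ C : ℝ, 0 < C ∧ ∀ β : ℝ, 0 < β → ∀ f g : V d → ℝ,
      (∀ x, 0 ≤ f x) → (∀ x, 0 ≤ g x) →
      (∀ x, f x ≤ β * (znorm x + 1) ^ (-q)) →
      (∀ x, g x ≤ (znorm x + 1) ^ (-q)) →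
      ∀ n : ℕ, 2 ≤ n → ∀ x y : V d,
        Msaw f g n x y ≤ ENNReal.ofReal β ^ n * (ENNReal.ofReal C * Sbar d q) ^ (n - 2) *
          w x ^ (-(2 * q)) * w y ^ (-q) := by
  have hq0 : 0 ≤ q := by linarith [(by positivity : (0 : ℝ) ≤ d / 2)]
  have hw : ∀ z : V d, w z ^ (-q) = ENNReal.ofReal ((znorm z + 1) ^ (-q)) := fun z =>
    ENNReal.ofReal_rpow_of_pos (by linarith [znorm_nonneg z])
  refine ⟨ne_top_of_le_ne_top (ENNReal.mul_ne_top ENNReal.ofNat_ne_top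
    (tsum_w_rpow_neg_ne_top hd (by linarith))) bubble_le_two_mul_tsum,
    4 * 2 ^ q * 2 ^ q, by positivity, ?_⟩
  intro β hβ f g _ _ hf hg n hn x y
  obtain ⟨n, rfl⟩ : ∃ m, n = m + 2 := ⟨n - 2, by omega⟩
  have hC : ENNReal.ofReal (4 * 2 ^ q * 2 ^ q) = 4 * 2 ^ q * 2 ^ q := by
    rw [ENNReal.ofReal_mul (by positivity), ENNReal.ofReal_mul (by positivity),
      ENNReal.ofReal_ofNat, ← ENNReal.ofReal_rpow_of_pos two_pos, ENNReal.ofReal_ofNat]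
  rw [Nat.add_sub_cancel]
  refine Msaw_le (fun z => ?_) (fun z => ?_) (fun a b => ?_) n x y
  · rw [hw, ← ENNReal.ofReal_mul hβ.le]; exact ENNReal.ofReal_le_ofReal (hf z)
  · rw [hw]; exact ENNReal.ofReal_le_ofReal (hg z)
  · rw [hC, Sbar_eq_bubble]
    exact tsum_rpow_neg_two_mul_mul_le_bubble hq0 w_neg w_le_add_w_sub a b
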